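/- Let r be a real number and let n, k be integers with n - 1 ≥ k ≥ 0. Then the extended r-central factorial numbers of the first kind satisfy the recurrence t_r(n+1+r, k+r) = t_r(n-1+r, k-2+r) + 2r · t_r(n-1+r, k-1+r) + (r² - ((n-1)/2)²) · t_r(n-1+r, k+r). -/

import Mathlib

open Polynomial

/-- The polynomial `(X + r)^{[n]}`: the central factorial of `X + r`, i.e.
`(X+r)^{[0]} = 1` and `(X+r)^{[n]} = (X+r) ∏_{i=1}^{n-1} (X + r + n/2 - i)` for `n ≥ 1`. -/
noncomputable def centralFactorialPoly (r : ℝ) : ℕ → Polynomial ℝ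
  | 0 => 1
  | n + 1 => (X + C r) *
      ∏ i ∈ Finset.range n, (X + C r + C (((n : ℝ) + 1) / 2) - C ((i : ℝ) + 1))

/-- The extended `r`-central factorial numbers of the first kind `t_r(n+r, k+r)`, defined
as the coefficients in `(x+r)^{[n]} = ∑_{k=0}^{n} t_r(n+r, k+r) x^k`, with the convention
that they vanish for `k < 0` (or `n < 0`), and automatically vanish for `k > n`. -/
noncomputable def rcentralt (r : ℝ) (n k : ℤ) : ℝ :=
  if 0 ≤ n ∧ 0 ≤ k then (centralFactorialPoly r n.toNat).coeff k.toNat else 0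

/-! The roots of `(X + r)^{[m+2]}` are those of `(X + r)^{[m]}` together with `-r ± m/2`, so
`(X + r)^{[m+2]} = ((X + r)^2 - (m/2)^2) (X + r)^{[m]}`; comparing coefficients of `X^k`
gives the recurrence. -/

theorem centralFactorialPoly_succ (r : ℝ) (n : ℕ) :
    centralFactorialPoly r (n + 1) =
      (X + C r) * ∏ i ∈ Finset.range n, (X + C (r + ((n : ℝ) - 1) / 2 - i)) := by
  rw [centralFactorialPoly]
  congr 1
  refine Finset.prod_congr rfl fun i _ => ?_
  rw [add_sub_assoc, add_assoc, ← C_sub, ← C_add]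
  congr 2
  ring

theorem centralFactorialPoly_add_two (r : ℝ) (m : ℕ) :
    centralFactorialPoly r (m + 2) =
      ((X + C r) ^ 2 - C (((m : ℝ) / 2) ^ 2)) * centralFactorialPoly r m := by
  cases m with
  | zero => simp [centralFactorialPoly, sq]
  | succ l =>
    rw [centralFactorialPoly_succ, centralFactorialPoly_succ, Finset.prod_range_succ',
      Finset.prod_range_succ]
    have inner : ∀ i ∈ Finset.range l,
        X + C (r + (((l + 1 + 1 : ℕ) : ℝ) - 1) / 2 - ((i + 1 : ℕ) : ℝ)) =
          X + C (r + ((l : ℝ) - 1) / 2 - i) := fun i _ => by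
      congr 2
      push_cast
      ring
    have extreme_factors (a b : ℝ) (ha : a = r - ((l + 1 : ℕ) : ℝ) / 2)
        (hb : b = r + ((l + 1 : ℕ) : ℝ) / 2) :
        (X + C a) * (X + C b) = (X + C r) ^ 2 - C ((((l + 1 : ℕ) : ℝ) / 2) ^ 2) := by
      simp only [ha, hb, C_add, C_sub, C_pow]
      ring
    rw [Finset.prod_congr rfl inner, mul_assoc _ _ (X + C _),
      extreme_factors _ _ (by push_cast; ring) (by push_cast; ring)]
    ring

theorem coeff_sq_add_C_sub_C_mul {R : Type*} [CommRing R] (p : R[X]) (a c : R) (j : ℕ) :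
    (((X + C a) ^ 2 - C c) * p).coeff j =
      (if 2 ≤ j then p.coeff (j - 2) else 0) +
        2 * a * (if 1 ≤ j then p.coeff (j - 1) else 0) + (a ^ 2 - c) * p.coeff j := by
  have expand : ((X + C a) ^ 2 - C c) * p =
      p * X ^ 2 + C (2 * a) * (p * X ^ 1) + C (a ^ 2 - c) * p := by
    simp only [C_sub, C_pow, C_mul, C_ofNat]
    ring
  rw [expand, coeff_add, coeff_add, coeff_C_mul, coeff_C_mul, coeff_mul_X_pow',
    coeff_mul_X_pow']

theorem rcentralt_natCast_sub (r : ℝ) (m j i : ℕ) :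
    rcentralt r m ((j : ℤ) - i) =
      if i ≤ j then (centralFactorialPoly r m).coeff (j - i) else 0 := by
  by_cases h : i ≤ j
  · rw [rcentralt, if_pos ⟨by omega, by omega⟩, if_pos h]
    congr
    omega
  · rw [rcentralt, if_neg (by omega), if_neg h]

theorem rcentralt_natCast (r : ℝ) (m j : ℕ) :
    rcentralt r m j = (centralFactorialPoly r m).coeff j := by
  simpa using rcentralt_natCast_sub r m j 0

/-- For a real `r` and integers `n, k` with `n - 1 ≥ k ≥ 0`:
`t_r(n+1+r, k+r) = t_r(n-1+r, k-2+r) + 2r·t_r(n-1+r, k-1+r) + (r² - ((n-1)/2)²)·t_r(n-1+r, k+r)`. -/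
theorem rcentralt_recurrence (r : ℝ) (n k : ℤ) (hk : 0 ≤ k) (hn : k ≤ n - 1) :
    rcentralt r (n + 1) k =
      rcentralt r (n - 1) (k - 2) + 2 * r * rcentralt r (n - 1) (k - 1) +
        (r ^ 2 - (((n : ℝ) - 1) / 2) ^ 2) * rcentralt r (n - 1) k := by
  lift k to ℕ using hk
  obtain ⟨m, rfl⟩ : ∃ m : ℕ, n = m + 1 := ⟨(n - 1).toNat, by omega⟩
  have hm : (((m : ℤ) + 1 : ℤ) : ℝ) - 1 = m := by push_cast; ring
  have shift_one := rcentralt_natCast_sub r m k 1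
  have shift_two := rcentralt_natCast_sub r m k 2
  push_cast at shift_one shift_two
  rw [add_sub_cancel_right, hm, show (m : ℤ) + 1 + 1 = ((m + 2 : ℕ) : ℤ) by push_cast; ring,
    rcentralt_natCast, rcentralt_natCast, centralFactorialPoly_add_two,
    coeff_sq_add_C_sub_C_mul, shift_one, shift_two]
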